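/- Under Conditions 1 and 2 (each assignment vector appears equally often across the designs in 𝒦̃_H, and each pair of assignment vectors with the same pairwise uniqueness u appears together equally often), the variance of the MSE of the difference-in-means estimator over a uniformly random design from 𝒦̃_H equals (4/N²)·ψ·( 2(N_A − H)/(H·N_A) + ((H−2)/H)·φ(𝒦̃_H) − ((N_A−2)/N_A)·φ(𝒦) ), where ψ depends only on the data (Y(0), Y(1)), φ(𝒦̃_H) is the average of (4/N)²(u−N/4)² over all non-mirror pairs in the designs of 𝒦̃_H, and φ(𝒦) is the same average over all N_A(N_A−2) ordered pairs of distinct non-mirror assignment vectors. In particular, for fixed H and data, the variance of the MSE is a linear increasing function of φ(𝒦̃_H). -/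

import Mathlib

open Finset

variable {ι : Type*} [DecidableEq ι]

/-- number of u-subsets of t containing a fixed element -/
lemma count_mem_psc (t : Finset ι) (u : ℕ) (hu : 1 ≤ u) {i : ι} (hi : i ∈ t) :
    ((t.powersetCard u).filter (fun A => i ∈ A)).card = (t.card - 1).choose (u - 1) := by
  rw [show t.card - 1 = (t.erase i).card from (Finset.card_erase_of_mem hi).symm,
      ← Finset.card_powersetCard (u-1) (t.erase i)]
  apply Finset.card_nbij' (fun A => A.erase i) (fun B => insert i B)
  · intro A hA
    simp only [mem_coe, mem_filter, mem_powersetCard] at hA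
    obtain ⟨⟨hsub, hcard⟩, hiA⟩ := hA
    simp only [mem_coe, mem_powersetCard]
    exact ⟨Finset.erase_subset_erase i hsub, by rw [Finset.card_erase_of_mem hiA, hcard]⟩
  · intro B hB
    simp only [mem_coe, mem_powersetCard] at hB
    obtain ⟨hsub, hcard⟩ := hB
    have hiB : i ∉ B := fun h => (Finset.notMem_erase i t) (hsub h)
    simp only [mem_coe, mem_filter, mem_powersetCard]
    refine ⟨⟨?_, ?_⟩, Finset.mem_insert_self i B⟩
    · intro x hx
      rcases Finset.mem_insert.mp hx with h | h
      · rwa [h]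
      · exact (Finset.erase_subset i t) (hsub h)
    · rw [Finset.card_insert_of_notMem hiB, hcard]
      omega
  · intro A hA
    simp only [mem_coe, mem_filter] at hA
    exact Finset.insert_erase hA.2
  · intro B hB
    simp only [mem_coe, mem_powersetCard] at hB
    have hiB : i ∉ B := fun h => (Finset.notMem_erase i t) (hB.1 h)
    exact Finset.erase_insert hiB

/-- number of u-subsets containing two fixed distinct elements -/
def R2nat (n u : ℕ) : ℕ := if 2 ≤ u then (n - 2).choose (u - 2) else 0

lemma count_pair_psc (t : Finset ι) (u : ℕ) {i j : ι} (hi : i ∈ t) (hj : j ∈ t)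
    (hij : i ≠ j) :
    ((t.powersetCard u).filter (fun A => i ∈ A ∧ j ∈ A)).card = R2nat t.card u := by
  unfold R2nat
  split_ifs with h2
  · -- u ≥ 2 : biject with (u-2)-subsets of t.erase i |>.erase j
    have hje : j ∈ t.erase i := Finset.mem_erase.mpr ⟨hij.symm, hj⟩
    rw [show t.card - 2 = ((t.erase i).erase j).card by
      rw [Finset.card_erase_of_mem hje, Finset.card_erase_of_mem hi]; omega,
      ← Finset.card_powersetCard (u-2)]
    apply Finset.card_nbij' (fun A => (A.erase i).erase j) (fun B => insert i (insert j B))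
    · intro A hA
      simp only [mem_coe, mem_filter, mem_powersetCard] at hA
      obtain ⟨⟨hsub, hcard⟩, hiA, hjA⟩ := hA
      simp only [mem_coe, mem_powersetCard]
      constructor
      · intro x hx
        simp only [Finset.mem_erase] at hx ⊢
        exact ⟨hx.1, hx.2.1, hsub hx.2.2⟩
      · rw [Finset.card_erase_of_mem (Finset.mem_erase.mpr ⟨hij.symm, hjA⟩),
          Finset.card_erase_of_mem hiA, hcard]
        omega
    · intro B hB
      simp only [mem_coe, mem_powersetCard] at hB
      obtain ⟨hsub, hcard⟩ := hB
      have hiB : i ∉ B := fun h => by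
        have := hsub h; simp only [Finset.mem_erase] at this; exact this.2.1 rfl
      have hjB : j ∉ B := fun h => by
        have := hsub h; simp only [Finset.mem_erase] at this; exact this.1 rfl
      simp only [mem_coe, mem_filter, mem_powersetCard]
      refine ⟨⟨?_, ?_⟩, Finset.mem_insert_self i _,
        Finset.mem_insert_of_mem (Finset.mem_insert_self j B)⟩
      · intro x hx
        rcases Finset.mem_insert.mp hx with h | h
        · rwa [h]
        rcases Finset.mem_insert.mp h with h | h
        · rwa [h]
        · have := hsub h; simp only [Finset.mem_erase] at this; exact this.2.2
      · rw [Finset.card_insert_of_notMem (by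
          simp only [Finset.mem_insert]; push_neg; exact ⟨hij, hiB⟩),
          Finset.card_insert_of_notMem hjB, hcard]
        omega
    · intro A hA
      simp only [mem_coe, mem_filter] at hA
      obtain ⟨_, hiA, hjA⟩ := hA
      beta_reduce
      rw [Finset.insert_erase (Finset.mem_erase.mpr ⟨hij.symm, hjA⟩), Finset.insert_erase hiA]
    · intro B hB
      simp only [mem_coe, mem_powersetCard] at hB
      have hiB : i ∉ B := fun h => by
        have := hB.1 h; simp only [Finset.mem_erase] at this; exact this.2.1 rfl
      have hjB : j ∉ B := fun h => by
        have := hB.1 h; simp only [Finset.mem_erase] at this; exact this.1 rfl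
      beta_reduce
      rw [Finset.erase_insert (by
        simp only [Finset.mem_insert]; push_neg; exact ⟨hij, hiB⟩),
        Finset.erase_insert hjB]
  · -- u ≤ 1 : impossible to contain two distinct elements
    rw [Finset.card_eq_zero, Finset.filter_eq_empty_iff]
    intro A hA
    simp only [mem_powersetCard] at hA
    rintro ⟨hiA, hjA⟩
    have : 2 ≤ A.card := Finset.one_lt_card.mpr ⟨i, hiA, j, hjA, hij⟩
    omega

lemma moment1 (t : Finset ι) (u : ℕ) (hu : 1 ≤ u) (f : ι → ℝ) :
    ∑ A ∈ t.powersetCard u, ∑ i ∈ A, f i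
      = ((t.card - 1).choose (u - 1) : ℝ) * ∑ i ∈ t, f i := by
  have h1 : ∀ A ∈ t.powersetCard u, ∑ i ∈ A, f i = ∑ i ∈ t, if i ∈ A then f i else 0 := by
    intro A hA
    rw [Finset.sum_ite_mem, Finset.inter_eq_right.mpr (mem_powersetCard.mp hA).1]
  rw [Finset.sum_congr rfl h1, Finset.sum_comm, Finset.mul_sum]
  refine Finset.sum_congr rfl fun i hi => ?_
  rw [← Finset.sum_filter, Finset.sum_const, count_mem_psc t u hu hi, nsmul_eq_mul]

lemma moment2 (t : Finset ι) (u : ℕ) (hu : 1 ≤ u) (f : ι → ℝ) :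
    ∑ A ∈ t.powersetCard u, (∑ i ∈ A, f i) ^ 2
      = ((t.card - 1).choose (u - 1) : ℝ) * ∑ i ∈ t, (f i) ^ 2
        + (R2nat t.card u : ℝ) * ((∑ i ∈ t, f i) ^ 2 - ∑ i ∈ t, (f i) ^ 2) := by
  have h1 : ∀ A ∈ t.powersetCard u, (∑ i ∈ A, f i) ^ 2
      = ∑ i ∈ t, ∑ j ∈ t, ((if i ∈ A then f i else 0) * (if j ∈ A then f j else 0)) := by
    intro A hA
    rw [← Finset.sum_mul_sum]
    have h2 : ∑ i ∈ t, (if i ∈ A then f i else 0) = ∑ i ∈ A, f i := by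
      rw [Finset.sum_ite_mem, Finset.inter_eq_right.mpr (mem_powersetCard.mp hA).1]
    rw [h2, sq]
  rw [Finset.sum_congr rfl h1, Finset.sum_comm]
  have h3 : ∀ i ∈ t, ∑ A ∈ t.powersetCard u, ∑ j ∈ t,
      ((if i ∈ A then f i else 0) * (if j ∈ A then f j else 0))
      = ∑ j ∈ t, ((R2nat t.card u : ℝ) * (f i * f j)
          + if j = i then (((t.card - 1).choose (u - 1) : ℝ) - (R2nat t.card u : ℝ)) * f i ^ 2
            else 0) := by
    intro i hi
    rw [Finset.sum_comm]
    refine Finset.sum_congr rfl fun j hj => ?_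
    have h4 : ∀ A : Finset ι, (if i ∈ A then f i else 0) * (if j ∈ A then f j else 0)
        = if i ∈ A ∧ j ∈ A then f i * f j else 0 := by
      intro A; split_ifs with h h' h' <;> simp_all
    simp only [h4]
    rw [← Finset.sum_filter, Finset.sum_const, nsmul_eq_mul]
    by_cases hji : j = i
    · subst hji
      have : ((t.powersetCard u).filter (fun A => j ∈ A ∧ j ∈ A))
          = (t.powersetCard u).filter (fun A => j ∈ A) := by simp
      rw [this, count_mem_psc t u hu hj, if_pos rfl]
      ring
    · rw [count_pair_psc t u hi hj (fun h => hji h.symm), if_neg hji]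
      ring
  rw [Finset.sum_congr rfl h3]
  rw [Finset.sum_congr rfl (fun i (hi : i ∈ t) => Finset.sum_add_distrib)]
  rw [Finset.sum_add_distrib]
  have h5 : ∀ i ∈ t, (∑ j ∈ t, if j = i then
      (((t.card - 1).choose (u - 1) : ℝ) - (R2nat t.card u : ℝ)) * f i ^ 2 else 0)
      = (((t.card - 1).choose (u - 1) : ℝ) - (R2nat t.card u : ℝ)) * f i ^ 2 := by
    intro i hi
    rw [Finset.sum_ite_eq' t i (fun _ => (((t.card - 1).choose (u - 1) : ℝ)
      - (R2nat t.card u : ℝ)) * f i ^ 2), if_pos hi]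
  rw [Finset.sum_congr rfl h5]
  have h6 : ∑ i ∈ t, ∑ j ∈ t, (R2nat t.card u : ℝ) * (f i * f j)
      = (R2nat t.card u : ℝ) * (∑ i ∈ t, f i) ^ 2 := by
    rw [sq, Finset.sum_mul_sum, Finset.mul_sum]
    exact Finset.sum_congr rfl fun i _ => by rw [Finset.mul_sum]
  rw [h6]
  simp only [sub_mul]
  rw [Finset.sum_sub_distrib, ← Finset.mul_sum, ← Finset.mul_sum]
  ring

lemma momentQuad (t : Finset ι) (u : ℕ) (hu : 1 ≤ u) (cc e : ℝ) (f : ι → ℝ) :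
    ∑ A ∈ t.powersetCard u, (cc + e * ∑ i ∈ A, f i) ^ 2
      = (t.card.choose u : ℝ) * cc ^ 2
        + 2 * cc * e * ((t.card - 1).choose (u - 1) : ℝ) * ∑ i ∈ t, f i
        + e ^ 2 * (((t.card - 1).choose (u - 1) : ℝ) * ∑ i ∈ t, (f i) ^ 2
            + (R2nat t.card u : ℝ) * ((∑ i ∈ t, f i) ^ 2 - ∑ i ∈ t, (f i) ^ 2)) := by
  have h1 : ∀ A ∈ t.powersetCard u, (cc + e * ∑ i ∈ A, f i) ^ 2
      = cc ^ 2 + (2 * cc * e) * ∑ i ∈ A, f i + e ^ 2 * (∑ i ∈ A, f i) ^ 2 := by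
    intro A _; ring
  rw [Finset.sum_congr rfl h1, Finset.sum_add_distrib, Finset.sum_add_distrib,
    Finset.sum_const, ← Finset.mul_sum, ← Finset.mul_sum, moment1 t u hu, moment2 t u hu,
    Finset.card_powersetCard, nsmul_eq_mul]
  ring

lemma bij_filter_sum {N : ℕ} (w : Finset (Fin N)) {n : ℕ} (hw : w.card = n) (u : ℕ)
    (f : Finset (Fin N) → ℝ) :
    ∑ v ∈ (Finset.powersetCard n (Finset.univ : Finset (Fin N))).filter
        (fun v => (w \ v).card = u), f v
      = ∑ p ∈ (w.powersetCard u) ×ˢ (wᶜ.powersetCard u), f ((w \ p.1) ∪ p.2) := by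
  apply Finset.sum_nbij' (fun v => ((w \ v, v \ w) : Finset (Fin N) × Finset (Fin N)))
    (fun p => (w \ p.1) ∪ p.2)
  · intro v hv
    simp only [mem_filter, mem_powersetCard] at hv
    obtain ⟨⟨_, hvcard⟩, hcu⟩ := hv
    simp only [Finset.mem_product, mem_powersetCard]
    refine ⟨⟨Finset.sdiff_subset, hcu⟩, fun x hx => ?_, ?_⟩
    · simp only [Finset.mem_sdiff] at hx
      exact Finset.mem_compl.mpr hx.2
    · have h1 := Finset.card_sdiff_add_card_inter v w
      have h2 := Finset.card_sdiff_add_card_inter w v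
      rw [Finset.inter_comm] at h1
      omega
  · intro p hp
    simp only [Finset.mem_product, mem_powersetCard] at hp
    obtain ⟨⟨hA, hAc⟩, hB, hBc⟩ := hp
    have hBw : ∀ x ∈ p.2, x ∉ w := fun x hx => Finset.mem_compl.mp (hB hx)
    have hun : u ≤ n := by rw [← hw, ← hAc]; exact Finset.card_le_card hA
    simp only [mem_filter, mem_powersetCard]
    refine ⟨⟨Finset.subset_univ _, ?_⟩, ?_⟩
    · rw [Finset.card_union_of_disjoint (by
        rw [Finset.disjoint_left]
        intro x hx
        simp only [Finset.mem_sdiff] at hx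
        exact fun hxB => hBw x hxB hx.1),
        Finset.card_sdiff_of_subset hA, hw, hAc, hBc]
      omega
    · have : w \ ((w \ p.1) ∪ p.2) = p.1 := by
        ext x
        have h1 : x ∈ p.1 → x ∈ w := fun h => hA h
        have h2 : x ∈ p.2 → x ∉ w := hBw x
        simp only [Finset.mem_sdiff, Finset.mem_union]
        tauto
      rw [this, hAc]
  · intro v hv
    simp only [mem_filter, mem_powersetCard] at hv
    ext x
    simp only [Finset.mem_union, Finset.mem_sdiff]
    tauto
  · intro p hp
    simp only [Finset.mem_product, mem_powersetCard] at hp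
    obtain ⟨⟨hA, _⟩, hB, _⟩ := hp
    have hBw : ∀ x ∈ p.2, x ∉ w := fun x hx => Finset.mem_compl.mp (hB hx)
    have e1 : w \ ((w \ p.1) ∪ p.2) = p.1 := by
      ext x
      have h1 : x ∈ p.1 → x ∈ w := fun h => hA h
      have h2 : x ∈ p.2 → x ∉ w := hBw x
      simp only [Finset.mem_sdiff, Finset.mem_union]
      tauto
    have e2 : ((w \ p.1) ∪ p.2) \ w = p.2 := by
      ext x
      have h2 : x ∈ p.2 → x ∉ w := hBw x
      simp only [Finset.mem_sdiff, Finset.mem_union]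
      tauto
    rw [e1, e2]
  · intro v hv
    have : (w \ (w \ v)) ∪ (v \ w) = v := by
      ext x
      simp only [Finset.mem_union, Finset.mem_sdiff]
      tauto
    exact (congrArg f this).symm

lemma momentQuad' (t : Finset ι) (u : ℕ) (hu : 1 ≤ u) (c0 c1 c2 : ℝ) (f : ι → ℝ) :
    ∑ A ∈ t.powersetCard u, (c0 + c1 * ∑ i ∈ A, f i + c2 * (∑ i ∈ A, f i) ^ 2)
      = (t.card.choose u : ℝ) * c0
        + c1 * (((t.card - 1).choose (u - 1) : ℝ) * ∑ i ∈ t, f i)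
        + c2 * (((t.card - 1).choose (u - 1) : ℝ) * ∑ i ∈ t, (f i) ^ 2
            + (R2nat t.card u : ℝ) * ((∑ i ∈ t, f i) ^ 2 - ∑ i ∈ t, (f i) ^ 2)) := by
  rw [Finset.sum_add_distrib, Finset.sum_add_distrib, Finset.sum_const,
    ← Finset.mul_sum, ← Finset.mul_sum, moment1 t u hu, moment2 t u hu,
    Finset.card_powersetCard, nsmul_eq_mul]

lemma innerSumW {N n : ℕ} (z : Fin N → ℝ) (w : Finset (Fin N)) (hw : w.card = n)
    (hwc : wᶜ.card = n) (u : ℕ) (hu : 1 ≤ u) :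
    ∑ v ∈ (Finset.powersetCard n (Finset.univ : Finset (Fin N))).filter
        (fun v => (w \ v).card = u), (2 * ∑ i ∈ v, z i - ∑ i, z i) ^ 2
    = (4 * (n.choose u : ℝ) * ((n - 1).choose (u - 1) : ℝ) * (∑ i, (z i) ^ 2)
        + 2 * (n.choose u : ℝ) * (R2nat n u : ℝ) * ((∑ i, z i) ^ 2 - 2 * ∑ i, (z i) ^ 2)
        - 2 * ((n - 1).choose (u - 1) : ℝ) ^ 2 * (∑ i, z i) ^ 2)
      + ((n.choose u : ℝ) ^ 2 - 4 * (n.choose u : ℝ) * ((n - 1).choose (u - 1) : ℝ)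
          + 2 * (n.choose u : ℝ) * (R2nat n u : ℝ) + 2 * ((n - 1).choose (u - 1) : ℝ) ^ 2)
        * (2 * ∑ i ∈ w, z i - ∑ i, z i) ^ 2 := by
  have hZ : ∑ i, z i = (∑ i ∈ w, z i) + ∑ i ∈ wᶜ, z i := (Finset.sum_add_sum_compl w z).symm
  have hQ : (∑ i, (z i) ^ 2) = (∑ i ∈ w, (z i) ^ 2) + ∑ i ∈ wᶜ, (z i) ^ 2 :=
    (Finset.sum_add_sum_compl w _).symm
  rw [bij_filter_sum w hw u, Finset.sum_product]
  have hstep1 : ∀ A ∈ w.powersetCard u,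
      ∑ B ∈ wᶜ.powersetCard u, (2 * ∑ i ∈ (w \ A) ∪ B, z i - ∑ i, z i) ^ 2
      = ∑ B ∈ wᶜ.powersetCard u,
          (((2 * ∑ i ∈ w, z i - ∑ i, z i) - 2 * ∑ i ∈ A, z i) ^ 2
            + (4 * ((2 * ∑ i ∈ w, z i - ∑ i, z i) - 2 * ∑ i ∈ A, z i)) * ∑ i ∈ B, z i
            + 4 * (∑ i ∈ B, z i) ^ 2) := by
    intro A hA
    refine Finset.sum_congr rfl fun B hB => ?_
    have hAs : A ⊆ w := (mem_powersetCard.mp hA).1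
    have hdisj : Disjoint (w \ A) B := by
      rw [Finset.disjoint_left]
      intro x hx hxB
      exact (Finset.mem_compl.mp ((mem_powersetCard.mp hB).1 hxB)) (Finset.mem_sdiff.mp hx).1
    rw [Finset.sum_union hdisj,
      eq_sub_of_add_eq (Finset.sum_sdiff hAs (f := z))]
    ring
  rw [Finset.sum_congr rfl hstep1]
  have hstep2 : ∀ A ∈ w.powersetCard u,
      ∑ B ∈ wᶜ.powersetCard u,
          (((2 * ∑ i ∈ w, z i - ∑ i, z i) - 2 * ∑ i ∈ A, z i) ^ 2
            + (4 * ((2 * ∑ i ∈ w, z i - ∑ i, z i) - 2 * ∑ i ∈ A, z i)) * ∑ i ∈ B, z i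
            + 4 * (∑ i ∈ B, z i) ^ 2)
      = (n.choose u : ℝ) * (((2 * ∑ i ∈ w, z i - ∑ i, z i) - 2 * ∑ i ∈ A, z i) ^ 2)
        + (4 * ((2 * ∑ i ∈ w, z i - ∑ i, z i) - 2 * ∑ i ∈ A, z i))
            * (((n - 1).choose (u - 1) : ℝ) * ∑ i ∈ wᶜ, z i)
        + 4 * (((n - 1).choose (u - 1) : ℝ) * ∑ i ∈ wᶜ, (z i) ^ 2
            + (R2nat n u : ℝ) * ((∑ i ∈ wᶜ, z i) ^ 2 - ∑ i ∈ wᶜ, (z i) ^ 2)) := by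
    intro A hA
    have := momentQuad' wᶜ u hu
      (((2 * ∑ i ∈ w, z i - ∑ i, z i) - 2 * ∑ i ∈ A, z i) ^ 2)
      (4 * ((2 * ∑ i ∈ w, z i - ∑ i, z i) - 2 * ∑ i ∈ A, z i)) 4 z
    rw [hwc] at this
    exact this
  rw [Finset.sum_congr rfl hstep2]
  have hstep3 : ∀ A ∈ w.powersetCard u,
      ((n.choose u : ℝ) * (((2 * ∑ i ∈ w, z i - ∑ i, z i) - 2 * ∑ i ∈ A, z i) ^ 2)
        + (4 * ((2 * ∑ i ∈ w, z i - ∑ i, z i) - 2 * ∑ i ∈ A, z i))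
            * (((n - 1).choose (u - 1) : ℝ) * ∑ i ∈ wᶜ, z i)
        + 4 * (((n - 1).choose (u - 1) : ℝ) * ∑ i ∈ wᶜ, (z i) ^ 2
            + (R2nat n u : ℝ) * ((∑ i ∈ wᶜ, z i) ^ 2 - ∑ i ∈ wᶜ, (z i) ^ 2)))
      = ((n.choose u : ℝ) * (2 * ∑ i ∈ w, z i - ∑ i, z i) ^ 2
          + 4 * (2 * ∑ i ∈ w, z i - ∑ i, z i) * (((n - 1).choose (u - 1) : ℝ) * ∑ i ∈ wᶜ, z i)
          + 4 * (((n - 1).choose (u - 1) : ℝ) * ∑ i ∈ wᶜ, (z i) ^ 2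
            + (R2nat n u : ℝ) * ((∑ i ∈ wᶜ, z i) ^ 2 - ∑ i ∈ wᶜ, (z i) ^ 2)))
        + (-4 * (n.choose u : ℝ) * (2 * ∑ i ∈ w, z i - ∑ i, z i)
            - 8 * (((n - 1).choose (u - 1) : ℝ) * ∑ i ∈ wᶜ, z i)) * ∑ i ∈ A, z i
        + (4 * (n.choose u : ℝ)) * (∑ i ∈ A, z i) ^ 2 := by
    intro A _
    ring
  rw [Finset.sum_congr rfl hstep3, momentQuad' w u hu _ _ _ z, hw]
  rw [hZ, hQ]
  ring

lemma swap_general {γ : Type*} {m : ℕ} (T : Finset γ) (Q : Fin m → γ → Prop)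
    [∀ k x, Decidable (Q k x)] (f : γ → ℝ) :
    ∑ k : Fin m, ∑ x ∈ T.filter (Q k), f x
      = ∑ x ∈ T, ((Finset.univ.filter (fun k => Q k x)).card : ℝ) * f x := by
  have h1 : ∀ k : Fin m, ∑ x ∈ T.filter (Q k), f x = ∑ x ∈ T, if Q k x then f x else 0 :=
    fun k => Finset.sum_filter _ _
  rw [Finset.sum_congr rfl (fun k _ => h1 k), Finset.sum_comm]
  refine Finset.sum_congr rfl fun x hx => ?_
  rw [← Finset.sum_filter, Finset.sum_const, nsmul_eq_mul]

lemma prod_filter_sum {γ : Type*} (W₁ W₂ : Finset γ) (P : γ × γ → Prop) [DecidablePred P]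
    (f : γ × γ → ℝ) :
    ∑ p ∈ (W₁ ×ˢ W₂).filter P, f p
      = ∑ a ∈ W₁, ∑ b ∈ W₂.filter (fun b => P (a, b)), f (a, b) := by
  rw [Finset.sum_filter, Finset.sum_product]
  exact Finset.sum_congr rfl fun a _ => (Finset.sum_filter _ _).symm

lemma memW_card {N n : ℕ} {v : Finset (Fin N)}
    (hv : v ∈ Finset.powersetCard n (Finset.univ : Finset (Fin N))) : v.card = n :=
  (mem_powersetCard.mp hv).2

lemma memW_compl {N n : ℕ} (hn : N = 2 * n) {v : Finset (Fin N)}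
    (hv : v ∈ Finset.powersetCard n (Finset.univ : Finset (Fin N))) :
    vᶜ ∈ Finset.powersetCard n (Finset.univ : Finset (Fin N)) := by
  rw [mem_powersetCard]
  refine ⟨Finset.subset_univ _, ?_⟩
  rw [Finset.card_compl, memW_card hv, Fintype.card_fin]
  omega

lemma neComplSelfW {N n : ℕ} (hn1 : 1 ≤ n) {v : Finset (Fin N)}
    (hv : v ∈ Finset.powersetCard n (Finset.univ : Finset (Fin N))) : v ≠ vᶜ := by
  intro h
  have hc := memW_card hv
  have hv0 : v = ∅ := by
    rw [← Finset.inter_self v]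
    nth_rewrite 2 [h]
    exact Finset.inter_compl v
  rw [hv0, Finset.card_empty] at hc
  omega

lemma card_sdiff_mem_Icc {N n : ℕ} (hn : N = 2 * n) {a b : Finset (Fin N)}
    (ha : a ∈ Finset.powersetCard n (Finset.univ : Finset (Fin N)))
    (hb : b ∈ Finset.powersetCard n (Finset.univ : Finset (Fin N)))
    (h1 : b ≠ a) (h2 : b ≠ aᶜ) : (a \ b).card ∈ Finset.Icc 1 (n - 1) := by
  have hac := memW_card ha
  have hbc := memW_card hb
  rw [Finset.mem_Icc]
  constructor
  · by_contra h
    push_neg at h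
    interval_cases h' : (a \ b).card
    have hsub : a ⊆ b := Finset.sdiff_eq_empty_iff_subset.mp (Finset.card_eq_zero.mp h')
    exact h1 (Finset.eq_of_subset_of_card_le hsub (by omega)).symm
  · have hle : (a \ b).card ≤ n := hac ▸ Finset.card_le_card Finset.sdiff_subset
    have hne : (a \ b).card ≠ n := by
      intro heq
      have hab : a \ b = a :=
        Finset.eq_of_subset_of_card_le Finset.sdiff_subset (by omega)
      have hsub : b ⊆ aᶜ := by
        intro x hx
        rw [Finset.mem_compl]
        intro hxa
        have : x ∈ a \ b := by rw [hab]; exact hxa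
        exact (Finset.mem_sdiff.mp this).2 hx
      have hcc : aᶜ.card = n := memW_card (memW_compl hn ha)
      exact h2 (Finset.eq_of_subset_of_card_le hsub (by omega))
    -- need 1 ≤ n for n - 1; from cards
    have : 1 ≤ n ∨ n = 0 := by omega
    omega

lemma pair_partition {N n : ℕ} (hn : N = 2 * n) (hn1 : 1 ≤ n) (E : Finset (Finset (Fin N)))
    (hE : E ⊆ Finset.powersetCard n (Finset.univ : Finset (Fin N)))
    (hmir : ∀ v ∈ E, vᶜ ∈ E) (G : Finset (Fin N) → ℝ) (hGc : ∀ v, G vᶜ = G v) :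
    (∑ v ∈ E, G v) ^ 2
      = 2 * ∑ v ∈ E, (G v) ^ 2
        + ∑ u ∈ Finset.Icc 1 (n - 1), ∑ p ∈ (E ×ˢ E).filter
            (fun p => p.2 ≠ p.1 ∧ p.2 ≠ p.1ᶜ ∧ (p.1 \ p.2).card = u),
            G p.1 * G p.2 := by
  have hsq : (∑ v ∈ E, G v) ^ 2 = ∑ p ∈ E ×ˢ E, G p.1 * G p.2 := by
    rw [Finset.sum_product, sq, Finset.sum_mul_sum]
  rw [hsq, ← Finset.sum_filter_add_sum_filter_not (E ×ˢ E)
    (fun p => p.2 = p.1 ∨ p.2 = p.1ᶜ) (fun p => G p.1 * G p.2)]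
  congr 1
  · -- diagonal + mirror part
    rw [Finset.filter_or, Finset.sum_union (by
      rw [Finset.disjoint_left]
      intro p hp1 hp2
      simp only [Finset.mem_filter] at hp1 hp2
      exact neComplSelfW hn1 (hE (Finset.mem_product.mp hp1.1).1) (hp1.2.symm.trans hp2.2))]
    have hd : ∑ p ∈ (E ×ˢ E).filter (fun p => p.2 = p.1), G p.1 * G p.2
        = ∑ v ∈ E, (G v) ^ 2 := by
      apply Finset.sum_nbij' (fun p => p.1) (fun v => (v, v))
      · intro p hp
        simp only [Finset.mem_filter, Finset.mem_product] at hp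
        exact hp.1.1
      · intro v hv
        simp only [Finset.mem_filter, Finset.mem_product]
        exact ⟨⟨hv, hv⟩, trivial⟩
      · intro p hp
        simp only [Finset.mem_filter] at hp
        exact Prod.ext rfl hp.2.symm
      · intro v hv
        rfl
      · intro p hp
        simp only [Finset.mem_filter] at hp
        rw [hp.2, sq]
    have hm : ∑ p ∈ (E ×ˢ E).filter (fun p => p.2 = p.1ᶜ), G p.1 * G p.2
        = ∑ v ∈ E, (G v) ^ 2 := by
      apply Finset.sum_nbij' (fun p => p.1) (fun v => (v, vᶜ))
      · intro p hp
        simp only [Finset.mem_filter, Finset.mem_product] at hp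
        exact hp.1.1
      · intro v hv
        simp only [Finset.mem_filter, Finset.mem_product]
        exact ⟨⟨hv, hmir v hv⟩, trivial⟩
      · intro p hp
        simp only [Finset.mem_filter] at hp
        exact Prod.ext rfl hp.2.symm
      · intro v hv
        rfl
      · intro p hp
        simp only [Finset.mem_filter] at hp
        rw [hp.2, hGc, sq]
    rw [hd, hm]
    ring
  · -- off-diagonal part: fiber by the sdiff-cardinality
    rw [← Finset.sum_fiberwise_of_maps_to (t := Finset.Icc 1 (n-1))
      (g := fun p => (p.1 \ p.2).card) (fun p hp => by
        simp only [Finset.mem_filter, Finset.mem_product] at hp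
        push_neg at hp
        exact card_sdiff_mem_Icc hn (hE hp.1.1) (hE hp.1.2) hp.2.1 hp.2.2)]
    refine Finset.sum_congr rfl fun u hu => ?_
    rw [Finset.filter_filter]
    apply Finset.sum_congr _ (fun _ _ => rfl)
    apply Finset.filter_congr
    intro p hp
    push_neg
    tauto

lemma choose_id1 (n u : ℕ) (hn : 1 ≤ n) (hu : 1 ≤ u) :
    n * (n - 1).choose (u - 1) = n.choose u * u := by
  obtain ⟨n', rfl⟩ : ∃ n', n = n' + 1 := ⟨n - 1, by omega⟩
  obtain ⟨u', rfl⟩ : ∃ u', u = u' + 1 := ⟨u - 1, by omega⟩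
  simpa using Nat.add_one_mul_choose_eq n' u'

lemma choose_id2 (n u : ℕ) (hn : 2 ≤ n) (hu : 1 ≤ u) :
    R2nat n u * (n * (n - 1)) = n.choose u * (u * (u - 1)) := by
  unfold R2nat
  split_ifs with h
  · obtain ⟨n', rfl⟩ : ∃ n', n = n' + 2 := ⟨n - 2, by omega⟩
    obtain ⟨u', rfl⟩ : ∃ u', u = u' + 2 := ⟨u - 2, by omega⟩
    simp only [Nat.add_sub_cancel]
    have h1 := Nat.add_one_mul_choose_eq (n' + 1) (u' + 1)
    have h2 := Nat.add_one_mul_choose_eq n' u'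
    simp only [Nat.succ_eq_add_one, Nat.add_assoc, Nat.reduceAdd] at h1 h2
    simp only [show ∀ a : ℕ, a + 2 - 1 = a + 1 from fun a => rfl]
    calc n'.choose u' * ((n' + 2) * (n' + 1))
        = (n' + 2) * ((n' + 1) * n'.choose u') := by ring_nf
      _ = (n' + 2) * ((n' + 1).choose (u' + 1) * (u' + 1)) := by rw [h2]
      _ = ((n' + 2) * (n' + 1).choose (u' + 1)) * (u' + 1) := by ring
      _ = ((n' + 2).choose (u' + 2) * (u' + 2)) * (u' + 1) := by rw [h1]
      _ = (n' + 2).choose (u' + 2) * ((u' + 2) * (u' + 1)) := by ring_nf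
  · have : u = 1 := by omega
    subst this
    simp

lemma star_alg (n u : ℕ) (hn : 2 ≤ n) (hu : 1 ≤ u) (S2 S4 Zr Q2 : ℝ) :
    (4 * (n.choose u : ℝ) * ((n - 1).choose (u - 1) : ℝ) * Q2
        + 2 * (n.choose u : ℝ) * (R2nat n u : ℝ) * (Zr ^ 2 - 2 * Q2)
        - 2 * ((n - 1).choose (u - 1) : ℝ) ^ 2 * Zr ^ 2) * S2
      + ((n.choose u : ℝ) ^ 2 - 4 * (n.choose u : ℝ) * ((n - 1).choose (u - 1) : ℝ)
          + 2 * (n.choose u : ℝ) * (R2nat n u : ℝ)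
          + 2 * ((n - 1).choose (u - 1) : ℝ) ^ 2) * S4
    = (n.choose u : ℝ) ^ 2 * (S4
        + (((2 * Zr ^ 2 - 4 * (n : ℝ) * Q2) * S2 + (4 * (n : ℝ) - 2) * S4)
            / ((n : ℝ) ^ 2 * ((n : ℝ) - 1)))
          * ((u : ℝ) ^ 2 - (n : ℝ) * (u : ℝ))) := by
  have hn0 : (n : ℝ) ≠ 0 := by positivity
  have hn1 : (n : ℝ) - 1 ≠ 0 := by
    have : (2 : ℝ) ≤ (n : ℝ) := by exact_mod_cast hn
    linarith
  have hr1 : ((n - 1).choose (u - 1) : ℝ) = (n.choose u : ℝ) * (u : ℝ) / (n : ℝ) := by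
    have := choose_id1 n u (by omega) hu
    have hc : ((n : ℝ)) * ((n - 1).choose (u - 1) : ℝ) = (n.choose u : ℝ) * (u : ℝ) := by
      exact_mod_cast this
    field_simp
    linarith
  have hr2 : (R2nat n u : ℝ)
      = (n.choose u : ℝ) * ((u : ℝ) * ((u : ℝ) - 1)) / ((n : ℝ) * ((n : ℝ) - 1)) := by
    have := choose_id2 n u hn hu
    have hc : (R2nat n u : ℝ) * ((n : ℝ) * ((n : ℝ) - 1))
        = (n.choose u : ℝ) * ((u : ℝ) * ((u : ℝ) - 1)) := by
      have hcast : ((n - 1 : ℕ) : ℝ) = (n : ℝ) - 1 := by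
        have h1n : 1 ≤ n := by omega
        push_cast [Nat.cast_sub h1n]
        ring
      have hcastu : ((u - 1 : ℕ) : ℝ) = (u : ℝ) - 1 := by
        push_cast [Nat.cast_sub hu]
        ring
      push_cast [← hcast, ← hcastu]
      exact_mod_cast this
    field_simp
    linarith
  rw [hr1, hr2]
  field_simp
  ring

lemma prod_filter_sumP {N : ℕ} (W₁ W₂ : Finset (Finset (Fin N))) (u : ℕ)
    (f g : Finset (Fin N) → ℝ) :
    ∑ p ∈ (W₁ ×ˢ W₂).filter (fun p => p.2 ≠ p.1 ∧ p.2 ≠ p.1ᶜ ∧ (p.1 \ p.2).card = u),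
        f p.1 * g p.2
      = ∑ a ∈ W₁, f a * ∑ b ∈ W₂.filter (fun b => b ≠ a ∧ b ≠ aᶜ ∧ (a \ b).card = u), g b := by
  rw [Finset.sum_filter, Finset.sum_product]
  refine Finset.sum_congr rfl fun a _ => ?_
  rw [Finset.mul_sum, Finset.sum_filter]

lemma filter_dist_eq {N n : ℕ} (hn : N = 2 * n) {a : Finset (Fin N)}
    (ha : a ∈ Finset.powersetCard n (Finset.univ : Finset (Fin N))) {u : ℕ}
    (hu1 : 1 ≤ u) (hu2 : u ≤ n - 1) :
    (Finset.powersetCard n (Finset.univ : Finset (Fin N))).filter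
        (fun b => b ≠ a ∧ b ≠ aᶜ ∧ (a \ b).card = u)
      = (Finset.powersetCard n (Finset.univ : Finset (Fin N))).filter
        (fun b => (a \ b).card = u) := by
  apply Finset.filter_congr
  intro b hb
  constructor
  · rintro ⟨_, _, h⟩; exact h
  · intro h
    refine ⟨?_, ?_, h⟩
    · rintro rfl
      rw [Finset.sdiff_self, Finset.card_empty] at h
      omega
    · rintro rfl
      have hcompl : a \ aᶜ = a := by
        ext x; simp
      rw [hcompl, memW_card ha] at h
      omega

set_option maxHeartbeats 4000000 in
/-- Theorem 4 of the paper: there exists a constant `ψ` depending only on the data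
`(Y(0), Y(1))` such that for every collection of size-`H` mirror-closed designs
satisfying Conditions 1 and 2, the variance of the MSE of the difference-in-means
estimator over a uniformly random design from the collection equals
`(4/N²)·ψ·( 2(N_A−H)/(H·N_A) + ((H−2)/H)·φ(𝒦̃_H) − ((N_A−2)/N_A)·φ(𝒦) )`. -/
theorem variance_mse_linear_in_assignment_correlation
    (N : ℕ) (hN : 0 < N) (hEven : Even N)
    (W : Finset (Finset (Fin N)))
    (hW : W = Finset.powersetCard (N / 2) (Finset.univ : Finset (Fin N)))
    (NA : ℕ) (hNA : NA = W.card)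
    (Y0 Y1 : Fin N → ℝ)
    (τ : ℝ) (hτ : τ = (1 / (N : ℝ)) * ∑ i, (Y1 i - Y0 i))
    (tauHat : Finset (Fin N) → ℝ)
    (htauHat : ∀ w, tauHat w = (2 / (N : ℝ)) * ((∑ i ∈ w, Y1 i) - ∑ i ∈ wᶜ, Y0 i))
    (σCR : ℝ) (hσ : σCR = (1 / (NA : ℝ)) * ∑ w ∈ W, (tauHat w - τ) ^ 2)
    (cnt : Finset (Finset (Fin N)) → ℕ → ℕ)
    (hcnt : ∀ E u, cnt E u = ((E ×ˢ E).filter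
        (fun p => p.2 ≠ p.1 ∧ p.2 ≠ p.1ᶜ ∧ (p.1 \ p.2).card = u)).card)
    (phiK : ℝ)
    (hphiK : phiK = (4 / (N : ℝ)) ^ 2 *
        ∑ u ∈ Finset.Icc 1 (N / 2 - 1),
          ((cnt W u : ℝ) / ((NA : ℝ) * ((NA : ℝ) - 2))) *
            ((u : ℝ) - (N : ℝ) / 4) ^ 2) :
    ∃ ψ : ℝ, ∀ (m H : ℕ), 0 < m → 4 ≤ H → Even H →
      ∀ D : Fin m → Finset (Finset (Fin N)),
      (∀ k, D k ⊆ W) → (∀ k, (D k).card = H) →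
      (∀ k, ∀ w ∈ D k, wᶜ ∈ D k) →
      ∀ c : ℕ, (∀ w ∈ W, (Finset.univ.filter (fun k => w ∈ D k)).card = c) →
      ∀ d : ℕ → ℕ,
      (∀ u : ℕ, ∀ a ∈ W, ∀ b ∈ W, b ≠ a → b ≠ aᶜ → (a \ b).card = u →
        (Finset.univ.filter (fun k => a ∈ D k ∧ b ∈ D k)).card = d u) →
      (1 / (m : ℝ)) * ∑ k, ((1 / (H : ℝ)) * (∑ w ∈ D k, (tauHat w - τ) ^ 2) - σCR) ^ 2
        = (4 / (N : ℝ) ^ 2) * ψ *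
          (2 * ((NA : ℝ) - H) / ((H : ℝ) * NA)
            + (((H : ℝ) - 2) / H) *
              ((4 / (N : ℝ)) ^ 2 *
                ∑ u ∈ Finset.Icc 1 (N / 2 - 1),
                  ((∑ k, (cnt (D k) u : ℝ)) / ((m : ℝ) * H * ((H : ℝ) - 2))) *
                    ((u : ℝ) - (N : ℝ) / 4) ^ 2)
            - (((NA : ℝ) - 2) / NA) * phiK) := by
  obtain ⟨n, hn⟩ : ∃ n, N = 2 * n := by
    obtain ⟨r, hr⟩ := hEven; exact ⟨r, by omega⟩
  have hn2 : N / 2 = n := by omega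
  have hn1 : 1 ≤ n := by omega
  have hW' : W = Finset.powersetCard n (Finset.univ : Finset (Fin N)) := by rw [hW, hn2]
  set z : Fin N → ℝ := fun i => Y1 i + Y0 i with hzdef
  set s : Finset (Fin N) → ℝ := fun v => 2 * ∑ i ∈ v, z i - ∑ i, z i with hsdef
  set S2 : ℝ := ∑ v ∈ W, (s v) ^ 2 with hS2def
  set S4 : ℝ := ∑ v ∈ W, (s v) ^ 4 with hS4def
  set Zr : ℝ := ∑ i, z i with hZrdef
  set Q2 : ℝ := ∑ i, (z i) ^ 2 with hQ2def
  set K1 : ℝ := ((2 * Zr ^ 2 - 4 * (n : ℝ) * Q2) * S2 + (4 * (n : ℝ) - 2) * S4)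
      / ((n : ℝ) ^ 2 * ((n : ℝ) - 1)) with hK1def
  refine ⟨K1 / (64 * (NA : ℝ)), ?_⟩
  intro m H hm hH _ D hDsub hDcard hDmir c hc1 d hd2
  -- dispatch the degenerate case n = 1
  have hNAc : NA = N.choose n := by
    rw [hNA, hW', Finset.card_powersetCard, Finset.card_univ, Fintype.card_fin]
  have h2n : 2 ≤ n := by
    by_contra hcon
    have hn1' : n = 1 := by omega
    have hNA2 : NA = 2 := by rw [hNAc, hn1', hn, hn1']; decide
    have hHle : H ≤ NA := by
      rw [hNA]
      calc H = (D ⟨0, hm⟩).card := (hDcard _).symm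
        _ ≤ W.card := Finset.card_le_card (hDsub _)
    omega
  have hNAge : 4 ≤ NA := by
    have h1 := Nat.choose_le_middle 1 (2 * n)
    rw [Nat.mul_div_cancel_left n (by norm_num : 0 < 2)] at h1
    rw [Nat.choose_one_right] at h1
    rw [hNAc, hn]
    omega
  -- nonzero facts
  have hNR : (N : ℝ) ≠ 0 := Nat.cast_ne_zero.mpr (by omega)
  have hnR : (n : ℝ) ≠ 0 := Nat.cast_ne_zero.mpr (by omega)
  have hnR1 : (n : ℝ) - 1 ≠ 0 := by
    have : (2 : ℝ) ≤ (n : ℝ) := by exact_mod_cast h2n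
    linarith
  have hNAR : (NA : ℝ) ≠ 0 := Nat.cast_ne_zero.mpr (by omega)
  have hNAR2 : (NA : ℝ) - 2 ≠ 0 := by
    have : (4 : ℝ) ≤ (NA : ℝ) := by exact_mod_cast hNAge
    linarith
  have hHR : (H : ℝ) ≠ 0 := Nat.cast_ne_zero.mpr (by omega)
  have hHR2 : (H : ℝ) - 2 ≠ 0 := by
    have : (4 : ℝ) ≤ (H : ℝ) := by exact_mod_cast hH
    linarith
  have hmR : (m : ℝ) ≠ 0 := Nat.cast_ne_zero.mpr (by omega)
  have hNreal : (N : ℝ) = 2 * (n : ℝ) := by push_cast [hn]; ring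
  -- basic identities
  have hEe : ∀ v : Finset (Fin N), tauHat v - τ = s v / N := by
    intro v
    have h0 : ∑ i ∈ vᶜ, Y0 i = ∑ i, Y0 i - ∑ i ∈ v, Y0 i := by
      have := Finset.sum_add_sum_compl v Y0; linarith
    have hsv : s v = 2 * (∑ i ∈ v, Y1 i + ∑ i ∈ v, Y0 i) - (∑ i, Y1 i + ∑ i, Y0 i) := by
      simp only [hsdef, hZrdef, hzdef, Finset.sum_add_distrib]
    have hsub : ∑ i, (Y1 i - Y0 i) = ∑ i, Y1 i - ∑ i, Y0 i := Finset.sum_sub_distrib _ _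
    rw [htauHat, hτ, h0, hsub, hsv]
    field_simp
    ring
  have hGs : ∀ v : Finset (Fin N), (tauHat v - τ) ^ 2 = (s v) ^ 2 / (N : ℝ) ^ 2 := by
    intro v; rw [hEe v, div_pow]
  have hscompl : ∀ v : Finset (Fin N), s vᶜ = - s v := by
    intro v
    simp only [hsdef]
    have := Finset.sum_add_sum_compl v z
    simp only [← hZrdef] at *
    linarith
  have hGc : ∀ v : Finset (Fin N), (tauHat vᶜ - τ) ^ 2 = (tauHat v - τ) ^ 2 := by
    intro v; rw [hGs, hGs, hscompl]; ring
  have hmemW_mir : ∀ v ∈ W, vᶜ ∈ W := by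
    intro v hv; rw [hW'] at hv ⊢; exact memW_compl hn hv
  -- main abbreviations
  set T2 : ℝ := ∑ v ∈ W, (tauHat v - τ) ^ 2 with hT2def
  set T4 : ℝ := ∑ v ∈ W, ((tauHat v - τ) ^ 2) ^ 2 with hT4def
  have hT2S : T2 = S2 / (N : ℝ) ^ 2 := by
    rw [hT2def, hS2def, Finset.sum_div]
    exact Finset.sum_congr rfl fun v _ => hGs v
  have hT4S : T4 = S4 / (N : ℝ) ^ 4 := by
    rw [hT4def, hS4def, Finset.sum_div]
    refine Finset.sum_congr rfl fun v _ => ?_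
    rw [hGs]; ring
  have hσ' : σCR = T2 / NA := by rw [hσ]; ring
  set Sd : ℝ := ∑ u ∈ Finset.Icc 1 (n - 1), (d u : ℝ) * ((n.choose u : ℝ)) ^ 2 with hSddef
  set Xd : ℝ := ∑ u ∈ Finset.Icc 1 (n - 1),
      (d u : ℝ) * ((n.choose u : ℝ)) ^ 2 * ((u : ℝ) ^ 2 - (n : ℝ) * (u : ℝ)) with hXddef
  set Si : ℝ := ∑ u ∈ Finset.Icc 1 (n - 1), ((n.choose u : ℝ)) ^ 2 with hSidef
  set Xi : ℝ := ∑ u ∈ Finset.Icc 1 (n - 1),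
      ((n.choose u : ℝ)) ^ 2 * ((u : ℝ) ^ 2 - (n : ℝ) * (u : ℝ)) with hXidef
  -- the key spectral identity
  have hstar : ∀ u ∈ Finset.Icc 1 (n - 1),
      ∑ p ∈ (W ×ˢ W).filter (fun p => p.2 ≠ p.1 ∧ p.2 ≠ p.1ᶜ ∧ (p.1 \ p.2).card = u),
          (tauHat p.1 - τ) ^ 2 * (tauHat p.2 - τ) ^ 2
        = ((n.choose u : ℝ)) ^ 2
            * (T4 + (K1 / (N : ℝ) ^ 4) * ((u : ℝ) ^ 2 - (n : ℝ) * (u : ℝ))) := by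
    intro u hu
    obtain ⟨hu1, hu2⟩ := Finset.mem_Icc.mp hu
    have hinner : ∀ a ∈ W,
        ∑ b ∈ W.filter (fun b => b ≠ a ∧ b ≠ aᶜ ∧ (a \ b).card = u), (tauHat b - τ) ^ 2
          = ((4 * (n.choose u : ℝ) * ((n - 1).choose (u - 1) : ℝ) * Q2
        + 2 * (n.choose u : ℝ) * (R2nat n u : ℝ) * (Zr ^ 2 - 2 * Q2)
        - 2 * ((n - 1).choose (u - 1) : ℝ) ^ 2 * Zr ^ 2)
              + ((n.choose u : ℝ) ^ 2 - 4 * (n.choose u : ℝ) * ((n - 1).choose (u - 1) : ℝ)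
          + 2 * (n.choose u : ℝ) * (R2nat n u : ℝ)
          + 2 * ((n - 1).choose (u - 1) : ℝ) ^ 2) * (s a) ^ 2) / (N : ℝ) ^ 2 := by
      intro a ha
      have haW : a ∈ Finset.powersetCard n (Finset.univ : Finset (Fin N)) := hW' ▸ ha
      rw [Finset.sum_congr rfl (fun b _ => hGs b), ← Finset.sum_div]
      congr 1
      rw [hW', filter_dist_eq hn haW hu1 hu2]
      exact innerSumW z a (memW_card haW) (memW_card (memW_compl hn haW)) u hu1
    calc ∑ p ∈ (W ×ˢ W).filter (fun p => p.2 ≠ p.1 ∧ p.2 ≠ p.1ᶜ ∧ (p.1 \ p.2).card = u),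
          (tauHat p.1 - τ) ^ 2 * (tauHat p.2 - τ) ^ 2
        = ∑ a ∈ W, (tauHat a - τ) ^ 2
            * ∑ b ∈ W.filter (fun b => b ≠ a ∧ b ≠ aᶜ ∧ (a \ b).card = u),
              (tauHat b - τ) ^ 2 :=
          prod_filter_sumP W W u (fun a => (tauHat a - τ) ^ 2) (fun b => (tauHat b - τ) ^ 2)
      _ = ∑ a ∈ W, ((4 * (n.choose u : ℝ) * ((n - 1).choose (u - 1) : ℝ) * Q2
        + 2 * (n.choose u : ℝ) * (R2nat n u : ℝ) * (Zr ^ 2 - 2 * Q2)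
        - 2 * ((n - 1).choose (u - 1) : ℝ) ^ 2 * Zr ^ 2) * (s a) ^ 2
            + ((n.choose u : ℝ) ^ 2 - 4 * (n.choose u : ℝ) * ((n - 1).choose (u - 1) : ℝ)
          + 2 * (n.choose u : ℝ) * (R2nat n u : ℝ)
          + 2 * ((n - 1).choose (u - 1) : ℝ) ^ 2) * (s a) ^ 4) / (N : ℝ) ^ 4 := by
          refine Finset.sum_congr rfl fun a ha => ?_
          rw [hinner a ha, hGs a]
          ring
      _ = ((4 * (n.choose u : ℝ) * ((n - 1).choose (u - 1) : ℝ) * Q2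
        + 2 * (n.choose u : ℝ) * (R2nat n u : ℝ) * (Zr ^ 2 - 2 * Q2)
        - 2 * ((n - 1).choose (u - 1) : ℝ) ^ 2 * Zr ^ 2) * S2
            + ((n.choose u : ℝ) ^ 2 - 4 * (n.choose u : ℝ) * ((n - 1).choose (u - 1) : ℝ)
          + 2 * (n.choose u : ℝ) * (R2nat n u : ℝ)
          + 2 * ((n - 1).choose (u - 1) : ℝ) ^ 2) * S4) / (N : ℝ) ^ 4 := by
          rw [← Finset.sum_div]
          congr 1
          rw [Finset.sum_add_distrib, ← Finset.mul_sum, ← Finset.mul_sum, ← hS2def, ← hS4def]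
      _ = ((n.choose u : ℝ)) ^ 2
            * (T4 + (K1 / (N : ℝ) ^ 4) * ((u : ℝ) ^ 2 - (n : ℝ) * (u : ℝ))) := by
          rw [star_alg n u h2n hu1 S2 S4 Zr Q2, ← hK1def, hT4S]
          ring
  -- counting within W
  have hinner1 : ∀ u ∈ Finset.Icc 1 (n - 1), ∀ a ∈ W,
      ∑ b ∈ W.filter (fun b => b ≠ a ∧ b ≠ aᶜ ∧ (a \ b).card = u), (1 : ℝ)
        = ((n.choose u : ℝ)) ^ 2 := by
    intro u hu a ha
    obtain ⟨hu1, hu2⟩ := Finset.mem_Icc.mp hu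
    rw [hW'] at ha ⊢
    rw [filter_dist_eq hn ha hu1 hu2, bij_filter_sum a (memW_card ha) u (fun _ => (1 : ℝ)),
      Finset.sum_const, Finset.card_product, Finset.card_powersetCard,
      Finset.card_powersetCard, memW_card ha, memW_card (memW_compl hn ha), nsmul_eq_mul]
    push_cast
    ring
  have hcntW : ∀ u ∈ Finset.Icc 1 (n - 1),
      (cnt W u : ℝ) = (NA : ℝ) * ((n.choose u : ℝ)) ^ 2 := by
    intro u hu
    rw [hcnt]
    have hcard : ((((W ×ˢ W).filter
        (fun p => p.2 ≠ p.1 ∧ p.2 ≠ p.1ᶜ ∧ (p.1 \ p.2).card = u)).card : ℝ))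
        = ∑ p ∈ (W ×ˢ W).filter
            (fun p => p.2 ≠ p.1 ∧ p.2 ≠ p.1ᶜ ∧ (p.1 \ p.2).card = u),
            (1 : ℝ) * (1 : ℝ) := by
      simp
    rw [hcard, prod_filter_sumP W W u (fun _ => (1 : ℝ)) (fun _ => (1 : ℝ))]
    rw [Finset.sum_congr rfl (fun a ha => by rw [hinner1 u hu a ha] :
      ∀ a ∈ W, (1 : ℝ) * ∑ b ∈ W.filter (fun b => b ≠ a ∧ b ≠ aᶜ ∧ (a \ b).card = u), (1 : ℝ)
        = (1 : ℝ) * ((n.choose u : ℝ)) ^ 2)]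
    rw [Finset.sum_const, nsmul_eq_mul, ← hNA]
    ring
  -- swap lemmas
  have hswap : ∀ f : Finset (Fin N) → ℝ,
      ∑ k, ∑ w ∈ D k, f w = (c : ℝ) * ∑ w ∈ W, f w := by
    intro f
    have h1 : ∀ k : Fin m, ∑ w ∈ D k, f w = ∑ w ∈ W.filter (fun w => w ∈ D k), f w := by
      intro k
      congr 1
      ext x
      simp only [Finset.mem_filter]
      exact ⟨fun h => ⟨hDsub k h, h⟩, fun h => h.2⟩
    rw [Finset.sum_congr rfl (fun k _ => h1 k), swap_general W (fun k w => w ∈ D k) f,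
      Finset.mul_sum]
    refine Finset.sum_congr rfl fun w hw => ?_
    rw [hc1 w hw]
  have hcNA : (c : ℝ) * (NA : ℝ) = (m : ℝ) * (H : ℝ) := by
    have h2 := hswap (fun _ => (1 : ℝ))
    simp only [Finset.sum_const, nsmul_eq_mul, mul_one, hDcard, Finset.card_univ,
      Fintype.card_fin] at h2
    rw [hNA]
    push_cast at h2 ⊢
    linarith
  have hswapP : ∀ u : ℕ, ∀ f : Finset (Fin N) × Finset (Fin N) → ℝ,
      ∑ k, ∑ p ∈ ((D k) ×ˢ (D k)).filter
          (fun p => p.2 ≠ p.1 ∧ p.2 ≠ p.1ᶜ ∧ (p.1 \ p.2).card = u), f p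
        = (d u : ℝ) * ∑ p ∈ (W ×ˢ W).filter
            (fun p => p.2 ≠ p.1 ∧ p.2 ≠ p.1ᶜ ∧ (p.1 \ p.2).card = u), f p := by
    intro u f
    have h1 : ∀ k : Fin m, ((D k) ×ˢ (D k)).filter
        (fun p => p.2 ≠ p.1 ∧ p.2 ≠ p.1ᶜ ∧ (p.1 \ p.2).card = u)
        = ((W ×ˢ W).filter (fun p => p.2 ≠ p.1 ∧ p.2 ≠ p.1ᶜ ∧ (p.1 \ p.2).card = u)).filter
            (fun p => p.1 ∈ D k ∧ p.2 ∈ D k) := by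
      intro k
      ext p
      simp only [Finset.mem_filter, Finset.mem_product]
      constructor
      · rintro ⟨⟨hp1, hp2⟩, hcond⟩
        exact ⟨⟨⟨hDsub k hp1, hDsub k hp2⟩, hcond⟩, hp1, hp2⟩
      · rintro ⟨⟨_, hcond⟩, hp1, hp2⟩
        exact ⟨⟨hp1, hp2⟩, hcond⟩
    rw [Finset.sum_congr rfl fun k _ => Finset.sum_congr (h1 k) (fun _ _ => rfl),
      swap_general _ (fun k p => p.1 ∈ D k ∧ p.2 ∈ D k) f, Finset.mul_sum]
    refine Finset.sum_congr rfl fun p hp => ?_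
    simp only [Finset.mem_filter, Finset.mem_product] at hp
    obtain ⟨⟨hp1, hp2⟩, hcond1, hcond2, hcond3⟩ := hp
    rw [hd2 u p.1 hp1 p.2 hp2 hcond1 hcond2 hcond3]
  -- pair partitions
  have hdesign : ∀ k, (∑ w ∈ D k, (tauHat w - τ) ^ 2) ^ 2
      = 2 * ∑ w ∈ D k, ((tauHat w - τ) ^ 2) ^ 2
        + ∑ u ∈ Finset.Icc 1 (n - 1), ∑ p ∈ ((D k) ×ˢ (D k)).filter
            (fun p => p.2 ≠ p.1 ∧ p.2 ≠ p.1ᶜ ∧ (p.1 \ p.2).card = u),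
            (tauHat p.1 - τ) ^ 2 * (tauHat p.2 - τ) ^ 2 := by
    intro k
    exact pair_partition hn hn1 (D k) (hW' ▸ hDsub k) (hDmir k) _ hGc
  have hWpair : T2 ^ 2 = 2 * T4
      + ∑ u ∈ Finset.Icc 1 (n - 1), ∑ p ∈ (W ×ˢ W).filter
          (fun p => p.2 ≠ p.1 ∧ p.2 ≠ p.1ᶜ ∧ (p.1 \ p.2).card = u),
          (tauHat p.1 - τ) ^ 2 * (tauHat p.2 - τ) ^ 2 := by
    exact pair_partition hn hn1 W (hW' ▸ Finset.Subset.refl W) hmemW_mir _ hGc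
  -- counting identities
  have hcntk : ∀ u : ℕ, ∑ k, (cnt (D k) u : ℝ) = (d u : ℝ) * (cnt W u : ℝ) := by
    intro u
    have h2 := hswapP u (fun _ => (1 : ℝ))
    simp only [Finset.sum_const, nsmul_eq_mul, mul_one] at h2
    simp only [hcnt]
    exact h2
  have hWones := pair_partition hn hn1 W (hW' ▸ Finset.Subset.refl W) hmemW_mir
    (fun _ => (1 : ℝ)) (fun _ => rfl)
  have hSi : Si = (NA : ℝ) - 2 := by
    simp only [Finset.sum_const, nsmul_eq_mul, mul_one, one_pow, one_mul] at hWones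
    have h3 : ∑ u ∈ Finset.Icc 1 (n - 1), (cnt W u : ℝ) = (NA : ℝ) ^ 2 - 2 * NA := by
      simp only [hcnt]
      push_cast at hWones ⊢
      rw [← hNA] at hWones
      linarith
    have h4 : ∑ u ∈ Finset.Icc 1 (n - 1), (cnt W u : ℝ) = (NA : ℝ) * Si := by
      rw [Finset.sum_congr rfl hcntW, hSidef, Finset.mul_sum]
    have h5 : (NA : ℝ) * Si = (NA : ℝ) * ((NA : ℝ) - 2) := by
      rw [← h4, h3]; ring
    exact mul_left_cancel₀ hNAR h5
  have hSd : (NA : ℝ) * Sd = (m : ℝ) * H * ((H : ℝ) - 2) := by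
    have h6 : ∀ k : Fin m, ∑ u ∈ Finset.Icc 1 (n - 1), (cnt (D k) u : ℝ)
        = (H : ℝ) ^ 2 - 2 * H := by
      intro k
      have hp := pair_partition hn hn1 (D k) (hW' ▸ hDsub k) (hDmir k)
        (fun _ => (1 : ℝ)) (fun _ => rfl)
      simp only [Finset.sum_const, nsmul_eq_mul, mul_one, one_pow, one_mul, hDcard] at hp
      simp only [hcnt]
      push_cast at hp ⊢
      linarith
    calc (NA : ℝ) * Sd
        = ∑ u ∈ Finset.Icc 1 (n - 1), (d u : ℝ) * (cnt W u : ℝ) := by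
          rw [hSddef, Finset.mul_sum]
          exact Finset.sum_congr rfl fun u hu => by rw [hcntW u hu]; ring
      _ = ∑ u ∈ Finset.Icc 1 (n - 1), ∑ k, (cnt (D k) u : ℝ) :=
          Finset.sum_congr rfl fun u _ => (hcntk u).symm
      _ = ∑ k, ∑ u ∈ Finset.Icc 1 (n - 1), (cnt (D k) u : ℝ) := Finset.sum_comm
      _ = ∑ k : Fin m, ((H : ℝ) ^ 2 - 2 * H) := Finset.sum_congr rfl fun k _ => h6 k
      _ = (m : ℝ) * H * ((H : ℝ) - 2) := by
          rw [Finset.sum_const, Finset.card_univ, Fintype.card_fin, nsmul_eq_mul]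
          ring
  -- consistency identity on W
  have hXis : T2 ^ 2 = 2 * T4 + (T4 * Si + (K1 / (N : ℝ) ^ 4) * Xi) := by
    rw [hWpair]
    congr 1
    calc ∑ u ∈ Finset.Icc 1 (n - 1), ∑ p ∈ (W ×ˢ W).filter
            (fun p => p.2 ≠ p.1 ∧ p.2 ≠ p.1ᶜ ∧ (p.1 \ p.2).card = u),
            (tauHat p.1 - τ) ^ 2 * (tauHat p.2 - τ) ^ 2
        = ∑ u ∈ Finset.Icc 1 (n - 1), (T4 * ((n.choose u : ℝ)) ^ 2
            + (K1 / (N : ℝ) ^ 4)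
              * (((n.choose u : ℝ)) ^ 2 * ((u : ℝ) ^ 2 - (n : ℝ) * (u : ℝ)))) :=
          Finset.sum_congr rfl fun u hu => by rw [hstar u hu]; ring
      _ = T4 * Si + (K1 / (N : ℝ) ^ 4) * Xi := by
          rw [Finset.sum_add_distrib, ← Finset.mul_sum, ← Finset.mul_sum, ← hSidef, ← hXidef]
  have hKXi : K1 * Xi = (N : ℝ) ^ 4 * (T2 ^ 2 - 2 * T4 - T4 * Si) := by
    have h7 : (K1 / (N : ℝ) ^ 4) * Xi = T2 ^ 2 - 2 * T4 - T4 * Si := by linarith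
    calc K1 * Xi = ((K1 / (N : ℝ) ^ 4) * Xi) * (N : ℝ) ^ 4 := by field_simp
      _ = (N : ℝ) ^ 4 * (T2 ^ 2 - 2 * T4 - T4 * Si) := by rw [h7]; ring
  -- the second moment of the design MSEs
  have hQk : ∑ k, (∑ w ∈ D k, (tauHat w - τ) ^ 2) ^ 2
      = 2 * (c : ℝ) * T4 + (T4 * Sd + (K1 / (N : ℝ) ^ 4) * Xd) := by
    rw [Finset.sum_congr rfl fun k _ => hdesign k, Finset.sum_add_distrib]
    congr 1
    · rw [← Finset.mul_sum, hswap (fun w => ((tauHat w - τ) ^ 2) ^ 2), ← hT4def]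
      ring
    · rw [Finset.sum_comm]
      calc ∑ u ∈ Finset.Icc 1 (n - 1), ∑ k, ∑ p ∈ ((D k) ×ˢ (D k)).filter
              (fun p => p.2 ≠ p.1 ∧ p.2 ≠ p.1ᶜ ∧ (p.1 \ p.2).card = u),
              (tauHat p.1 - τ) ^ 2 * (tauHat p.2 - τ) ^ 2
          = ∑ u ∈ Finset.Icc 1 (n - 1), (d u : ℝ) * ∑ p ∈ (W ×ˢ W).filter
              (fun p => p.2 ≠ p.1 ∧ p.2 ≠ p.1ᶜ ∧ (p.1 \ p.2).card = u),
              (tauHat p.1 - τ) ^ 2 * (tauHat p.2 - τ) ^ 2 :=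
            Finset.sum_congr rfl fun u _ => hswapP u _
        _ = ∑ u ∈ Finset.Icc 1 (n - 1), (T4 * ((d u : ℝ) * ((n.choose u : ℝ)) ^ 2)
              + (K1 / (N : ℝ) ^ 4) * ((d u : ℝ) * ((n.choose u : ℝ)) ^ 2
                  * ((u : ℝ) ^ 2 - (n : ℝ) * (u : ℝ)))) :=
            Finset.sum_congr rfl fun u hu => by rw [hstar u hu]; ring
        _ = T4 * Sd + (K1 / (N : ℝ) ^ 4) * Xd := by
            rw [Finset.sum_add_distrib, ← Finset.mul_sum, ← Finset.mul_sum, ← hSddef, ← hXddef]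
  have hc' : (c : ℝ) = (m : ℝ) * H / NA := by
    rw [eq_div_iff hNAR]; linarith [hcNA]
  have hSd' : Sd = (m : ℝ) * H * ((H : ℝ) - 2) / NA := by
    rw [eq_div_iff hNAR]; linarith [hSd]
  -- evaluate the two u-sums appearing on the RHS
  have hsum1 : ∑ u ∈ Finset.Icc 1 (n - 1),
      ((∑ k, (cnt (D k) u : ℝ)) / ((m : ℝ) * H * ((H : ℝ) - 2))) * ((u : ℝ) - (N : ℝ) / 4) ^ 2
      = ((NA : ℝ) / ((m : ℝ) * H * ((H : ℝ) - 2))) * (Xd + ((N : ℝ) ^ 2 / 16) * Sd) := by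
    calc ∑ u ∈ Finset.Icc 1 (n - 1),
        ((∑ k, (cnt (D k) u : ℝ)) / ((m : ℝ) * H * ((H : ℝ) - 2)))
          * ((u : ℝ) - (N : ℝ) / 4) ^ 2
        = ∑ u ∈ Finset.Icc 1 (n - 1), ((NA : ℝ) / ((m : ℝ) * H * ((H : ℝ) - 2)))
            * ((d u : ℝ) * ((n.choose u : ℝ)) ^ 2 * ((u : ℝ) ^ 2 - (n : ℝ) * (u : ℝ))
              + ((N : ℝ) ^ 2 / 16) * ((d u : ℝ) * ((n.choose u : ℝ)) ^ 2)) :=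
          Finset.sum_congr rfl fun u hu => by rw [hcntk u, hcntW u hu, hNreal]; ring
      _ = ((NA : ℝ) / ((m : ℝ) * H * ((H : ℝ) - 2))) * (Xd + ((N : ℝ) ^ 2 / 16) * Sd) := by
          rw [← Finset.mul_sum, Finset.sum_add_distrib, ← Finset.mul_sum,
            ← hXddef, ← hSddef]
  have hsum2 : ∑ u ∈ Finset.Icc 1 (n - 1),
      ((cnt W u : ℝ) / ((NA : ℝ) * ((NA : ℝ) - 2))) * ((u : ℝ) - (N : ℝ) / 4) ^ 2
      = (1 / ((NA : ℝ) - 2)) * (Xi + ((N : ℝ) ^ 2 / 16) * Si) := by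
    calc ∑ u ∈ Finset.Icc 1 (n - 1),
        ((cnt W u : ℝ) / ((NA : ℝ) * ((NA : ℝ) - 2))) * ((u : ℝ) - (N : ℝ) / 4) ^ 2
        = ∑ u ∈ Finset.Icc 1 (n - 1), (1 / ((NA : ℝ) - 2))
            * (((n.choose u : ℝ)) ^ 2 * ((u : ℝ) ^ 2 - (n : ℝ) * (u : ℝ))
              + ((N : ℝ) ^ 2 / 16) * ((n.choose u : ℝ)) ^ 2) :=
          Finset.sum_congr rfl fun u hu => by
            rw [hcntW u hu, hNreal]
            field_simp
            ring
      _ = (1 / ((NA : ℝ) - 2)) * (Xi + ((N : ℝ) ^ 2 / 16) * Si) := by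
          rw [← Finset.mul_sum, Finset.sum_add_distrib, ← Finset.mul_sum,
            ← hXidef, ← hSidef]
  -- rewrite the goal
  have hexp : ∀ k : Fin m, ((1 / (H : ℝ)) * (∑ w ∈ D k, (tauHat w - τ) ^ 2) - T2 / NA) ^ 2
      = (1 / (H : ℝ) ^ 2) * ((∑ w ∈ D k, (tauHat w - τ) ^ 2)) ^ 2
        - (2 * (T2 / NA) * (1 / (H : ℝ))) * (∑ w ∈ D k, (tauHat w - τ) ^ 2)
        + (T2 / NA) ^ 2 := fun k => by ring
  rw [hσ', hphiK, hn2, hsum1, hsum2]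
  rw [Finset.sum_congr rfl fun k _ => hexp k, Finset.sum_add_distrib, Finset.sum_sub_distrib,
    ← Finset.mul_sum, ← Finset.mul_sum, hQk, hswap (fun w => (tauHat w - τ) ^ 2), ← hT2def,
    Finset.sum_const, Finset.card_univ, Fintype.card_fin, nsmul_eq_mul]
  have hRgroup : ∀ A B : ℝ, (4 / (N : ℝ) ^ 2) * (K1 / (64 * (NA : ℝ)))
      * (A + B - (((NA : ℝ) - 2) / NA) * ((4 / (N : ℝ)) ^ 2
          * ((1 / ((NA : ℝ) - 2)) * (Xi + ((N : ℝ) ^ 2 / 16) * Si))))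
      = (4 / (N : ℝ) ^ 2) * (K1 / (64 * (NA : ℝ))) * (A + B)
        - (4 / (N : ℝ) ^ 2) * (1 / (64 * (NA : ℝ)))
          * ((((NA : ℝ) - 2) / NA) * ((4 / (N : ℝ)) ^ 2
              * ((1 / ((NA : ℝ) - 2)) * (K1 * Xi + ((N : ℝ) ^ 2 / 16) * (K1 * Si))))) :=
    fun A B => by ring
  rw [hRgroup, hKXi, hSi, hc', hSd']
  field_simp
  ring
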